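/- arXiv:2407.06319 — 10 statements merged into one kernel-verified Lean document; each statement's English description precedes it below -/
import Mathlib

section
/- If S is a unipotent numerical monoid and A is a nonidentity element of S, then the left Apéry set Ap_l(S,A) := {B ∈ S : A⁻¹B ∉ S} together with A generates S as a monoid. -/
open Matrix Set Pointwise

/-- The general linear group of `n × n` integer matrices. -/
abbrev GLn (n : ℕ) := Matrix.GeneralLinearGroup (Fin n) ℤ

/-- `A` is an upper unitriangular matrix (the group `U(n)`). -/
def Unitri {n : ℕ} (A : GLn n) : Prop :=
  (∀ i : Fin n, (A : Matrix (Fin n) (Fin n) ℤ) i i = 1) ∧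
  ∀ i j : Fin n, j < i → (A : Matrix (Fin n) (Fin n) ℤ) i j = 0

/-- `G(ℕ)`: the points of the subgroup `G` all of whose entries are natural numbers. -/
def GNat {n : ℕ} (G : Subgroup (GLn n)) : Set (GLn n) :=
  {A | A ∈ G ∧ ∀ i j : Fin n, 0 ≤ (A : Matrix (Fin n) (Fin n) ℤ) i j}

/-- A unipotent numerical monoid in `G`: a finitely generated submonoid of `G(ℕ)`
with finite complement in `G(ℕ)`. -/
def IsUNM {n : ℕ} (G : Subgroup (GLn n)) (S : Set (GLn n)) : Prop :=
  S ⊆ GNat G ∧ (1 : GLn n) ∈ S ∧ (∀ A ∈ S, ∀ B ∈ S, A * B ∈ S) ∧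
  (GNat G \ S).Finite ∧
  ∃ F : Finset (GLn n), (Submonoid.closure (F : Set (GLn n)) : Set (GLn n)) = S

/-- Key estimate: multiplying by a nonidentity nonnegative unidiagonal matrix strictly
increases the total entry sum. -/
lemma sum_lt_sum_mul {n : ℕ} (A C : GLn n)
    (hAd : ∀ i : Fin n, (A : Matrix (Fin n) (Fin n) ℤ) i i = 1)
    (hCd : ∀ i : Fin n, (C : Matrix (Fin n) (Fin n) ℤ) i i = 1)
    (hAn : ∀ i j, 0 ≤ (A : Matrix (Fin n) (Fin n) ℤ) i j)
    (hCn : ∀ i j, 0 ≤ (C : Matrix (Fin n) (Fin n) ℤ) i j)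
    (hA1 : A ≠ 1) :
    (∑ i, ∑ j, (C : Matrix (Fin n) (Fin n) ℤ) i j)
      < ∑ i, ∑ j, ((A * C : GLn n) : Matrix (Fin n) (Fin n) ℤ) i j := by
  set MA : Matrix (Fin n) (Fin n) ℤ := (A : Matrix (Fin n) (Fin n) ℤ) with hMA
  set MC : Matrix (Fin n) (Fin n) ℤ := (C : Matrix (Fin n) (Fin n) ℤ) with hMC
  -- a witness of nonidentity
  obtain ⟨i0, j0, hij⟩ : ∃ i j, MA i j ≠ (1 : Matrix (Fin n) (Fin n) ℤ) i j := by
    by_contra h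
    push_neg at h
    exact hA1 (Units.ext (Matrix.ext h))
  have hne : i0 ≠ j0 := by
    intro h; subst h
    exact hij (by simp [hAd i0])
  have hA01 : 1 ≤ MA i0 j0 := by
    have h0 : MA i0 j0 ≠ 0 := by
      intro h; exact hij (by simp [h, Matrix.one_apply, hne])
    have := hAn i0 j0
    omega
  -- row sums of C
  set r : Fin n → ℤ := fun k => ∑ j, MC k j with hr
  have hrn : ∀ k, 0 ≤ r k := fun k => Finset.sum_nonneg fun j _ => hCn k j
  have hr1 : ∀ k, 1 ≤ r k := by
    intro k
    have := Finset.single_le_sum (f := fun j => MC k j)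
      (fun j _ => hCn k j) (Finset.mem_univ k)
    simpa [hCd k] using this
  have hprod : ((A * C : GLn n) : Matrix (Fin n) (Fin n) ℤ) = MA * MC := by
    simp [hMA, hMC]
  have hsum : (∑ i, ∑ j, ((A * C : GLn n) : Matrix (Fin n) (Fin n) ℤ) i j)
      = ∑ i, ∑ k, MA i k * r k := by
    rw [hprod]
    refine Finset.sum_congr rfl fun i _ => ?_
    simp only [Matrix.mul_apply]
    rw [Finset.sum_comm]
    exact Finset.sum_congr rfl fun k _ => by rw [hr]; exact (Finset.mul_sum _ _ _).symm
  rw [hsum]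
  have key : ∀ i : Fin n, r i + (if i = i0 then 1 else 0) ≤ ∑ k, MA i k * r k := by
    intro i
    by_cases h : i = i0
    · rw [h, if_pos rfl]
      have hle : ∑ k ∈ ({i0, j0} : Finset (Fin n)), MA i0 k * r k
          ≤ ∑ k, MA i0 k * r k :=
        Finset.sum_le_sum_of_subset_of_nonneg (Finset.subset_univ _) fun k _ _ =>
          mul_nonneg (hAn i0 k) (hrn k)
      rw [Finset.sum_pair hne] at hle
      have h1 : r i0 + 1 ≤ MA i0 i0 * r i0 + MA i0 j0 * r j0 := by
        rw [hAd i0, one_mul]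
        have : 1 ≤ MA i0 j0 * r j0 :=
          one_le_mul_of_one_le_of_one_le hA01 (hr1 j0)
        omega
      omega
    · simp only [if_neg h, add_zero]
      have := Finset.single_le_sum (f := fun k => MA i k * r k)
        (fun k _ => mul_nonneg (hAn i k) (hrn k)) (Finset.mem_univ i)
      simpa [hAd i] using this
  have := Finset.sum_le_sum (fun i (_ : i ∈ Finset.univ) => key i)
  rw [Finset.sum_add_distrib, Finset.sum_ite_eq' Finset.univ i0 (fun _ => (1 : ℤ)),
    if_pos (Finset.mem_univ i0)] at this
  have hr_eq : (∑ i, ∑ j, MC i j) = ∑ i, r i := rfl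
  rw [hr_eq]
  omega

/-- If `S` is a unipotent numerical monoid and `A ∈ S` is a nonidentity element, then
the left Apéry set `Ap_l(S,A) = {B ∈ S | A⁻¹B ∉ S}` together with `A` generates `S`. -/
theorem apery_generates {n : ℕ} (G : Subgroup (GLn n)) (hG : ∀ A ∈ G, Unitri A)
    (S : Set (GLn n)) (hS : IsUNM G S) (A : GLn n) (hA : A ∈ S) (hA1 : A ≠ 1) :
    (Submonoid.closure ({B ∈ S | A⁻¹ * B ∉ S} ∪ {A}) : Set (GLn n)) = S := by
  obtain ⟨hsub, hone, hmul, -, -⟩ := hS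
  -- S as a submonoid
  let S' : Submonoid (GLn n) :=
    { carrier := S
      one_mem' := hone
      mul_mem' := fun {a b} ha hb => hmul a ha b hb }
  apply Set.Subset.antisymm
  · -- closure ⊆ S
    have : Submonoid.closure ({B ∈ S | A⁻¹ * B ∉ S} ∪ {A}) ≤ S' := by
      rw [Submonoid.closure_le]
      rintro x (⟨hx, -⟩ | hx)
      · exact hx
      · rw [Set.mem_singleton_iff] at hx
        exact hx ▸ hA
    exact this
  · -- S ⊆ closure, by strong induction on the entry-sum measure
    intro B hB
    set msr : GLn n → ℕ :=
      fun M => (∑ i, ∑ j, (M : Matrix (Fin n) (Fin n) ℤ) i j).toNat with hmsr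
    have main : ∀ N : ℕ, ∀ B ∈ S, msr B ≤ N →
        B ∈ (Submonoid.closure ({B ∈ S | A⁻¹ * B ∉ S} ∪ {A}) : Set (GLn n)) := by
      intro N
      induction N with
      | zero =>
        intro B hB _
        by_cases hC : A⁻¹ * B ∈ S
        · -- impossible: measure would be negative
          have hAG := hsub hA
          have hCG := hsub hC
          have hAu := hG A hAG.1
          have hCu := hG _ hCG.1
          have hlt := sum_lt_sum_mul A (A⁻¹ * B) hAu.1 hCu.1 hAG.2 hCG.2 hA1
          rw [mul_inv_cancel_left] at hlt
          have h0 : 0 ≤ ∑ i, ∑ j, ((A⁻¹ * B : GLn n) : Matrix (Fin n) (Fin n) ℤ) i j :=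
            Finset.sum_nonneg fun i _ => Finset.sum_nonneg fun j _ => hCG.2 i j
          have hBle : msr B = 0 := by omega
          simp only [hmsr] at hBle
          omega
        · exact Submonoid.subset_closure (Or.inl ⟨hB, hC⟩)
      | succ N ih =>
        intro B hB hle
        by_cases hC : A⁻¹ * B ∈ S
        · have hAG := hsub hA
          have hCG := hsub hC
          have hAu := hG A hAG.1
          have hCu := hG _ hCG.1
          have hlt := sum_lt_sum_mul A (A⁻¹ * B) hAu.1 hCu.1 hAG.2 hCG.2 hA1
          rw [mul_inv_cancel_left] at hlt
          have h0 : 0 ≤ ∑ i, ∑ j, ((A⁻¹ * B : GLn n) : Matrix (Fin n) (Fin n) ℤ) i j :=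
            Finset.sum_nonneg fun i _ => Finset.sum_nonneg fun j _ => hCG.2 i j
          have hmlt : msr (A⁻¹ * B) < msr B := by
            simp only [hmsr]
            omega
          have hCmem := ih (A⁻¹ * B) hC (by omega)
          have hAmem : A ∈ Submonoid.closure ({B ∈ S | A⁻¹ * B ∉ S} ∪ {A}) :=
            Submonoid.subset_closure (Or.inr rfl)
          have := Submonoid.mul_mem _ hAmem hCmem
          rwa [mul_inv_cancel_left] at this
        · exact Submonoid.subset_closure (Or.inl ⟨hB, hC⟩)
    exact main (msr B) B hB le_rfl
end

section
/- The set {E_{i,j} : 1 ≤ i < j ≤ n} of elementary matrices is the unique minimal generating set for the monoid U(n,ℕ) of upper-triangular unipotent matrices with natural number entries. -/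
open Matrix Set

/-- The monoid `U(n,ℕ)` of upper triangular unipotent matrices with natural number
entries. -/
def UNNat (n : ℕ) : Set (Matrix (Fin n) (Fin n) ℕ) :=
  {A | (∀ i : Fin n, A i i = 1) ∧ ∀ i j : Fin n, j < i → A i j = 0}

/-- The elementary matrix `E_{i,j}`: the identity with an extra `1` in position `(i,j)`. -/
def Elem (n : ℕ) (i j : Fin n) : Matrix (Fin n) (Fin n) ℕ :=
  1 + Matrix.single i j 1

/- Every non-identity `A ∈ U(n,ℕ)` factors as `E_{i,j} * A'` with `A'` of smaller entry sum:
take a nonzero off-diagonal entry `(i,j)` in the lowest possible row; then row `j` of `A` is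
the unit row, so `E_{i,j}` acting on the left merely adds `1` at `(i,j)`. Conversely, each
`E_{i,j}` is indecomposable in `U(n,ℕ)`: for `k ≠ l` the entries `X k l` and `Y k l` both occur
in `(X * Y) k l`, so in a factorization `X * Y = E_{i,j}` the single off-diagonal `1` can only
come from one factor. An indecomposable element lies in every generating set. -/

theorem Submonoid.mem_of_mem_closure_of_indecomposable {M : Type*} [Monoid M] {B : Set M}
    {a : M} (ha : a ∈ closure B) (ha₁ : a ≠ 1)
    (hirr : ∀ x ∈ closure B, ∀ y ∈ closure B, x * y = a → x = 1 ∨ y = 1) : a ∈ B := by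
  induction ha using closure_induction with
  | mem x hx => exact hx
  | one => exact absurd rfl ha₁
  | mul x y hx hy ihx ihy =>
    rcases hirr x hx y hy rfl with rfl | rfl
    · rw [one_mul] at ha₁ hirr ⊢
      exact ihy ha₁ hirr
    · rw [mul_one] at ha₁ hirr ⊢
      exact ihx ha₁ hirr

namespace Matrix

variable {n α : Type*} [DecidableEq n]

theorem single_mul_of_row_eq_one [Fintype n] [Semiring α] {A : Matrix n n α} {j : n}
    (hA : A j = (1 : Matrix n n α) j) (i : n) (c : α) : single i j c * A = single i j c := by
  ext k l
  by_cases hk : k = i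
  · subst hk
    simp [hA, one_apply, single_apply]
  · simp [hk, Ne.symm hk]

theorem exists_ne_zero_of_diag_eq_one [Zero α] [One α] {A : Matrix n n α}
    (hdiag : ∀ i, A i i = 1) (h : A ≠ 1) : ∃ k l, k ≠ l ∧ A k l ≠ 0 := by
  contrapose! h
  ext k l
  by_cases hkl : k = l
  · subst hkl
    simp [hdiag]
  · simp [hkl, h k l hkl]

theorem add_le_mul_apply_of_diag_eq_one [Fintype n] [Semiring α] [PartialOrder α]
    [CanonicallyOrderedAdd α] {X Y : Matrix n n α} {k l : n} (hX : X k k = 1)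
    (hY : Y l l = 1) (hkl : k ≠ l) : X k l + Y k l ≤ (X * Y) k l :=
  calc X k l + Y k l = ∑ m ∈ ({k, l} : Finset n), X k m * Y m l := by
        rw [Finset.sum_pair hkl, hX, hY, one_mul, mul_one, add_comm]
    _ ≤ ∑ m, X k m * Y m l := Finset.sum_le_sum_of_subset (Finset.subset_univ _)

end Matrix

namespace UNNat

variable {n : ℕ}

theorem one_mem : (1 : Matrix (Fin n) (Fin n) ℕ) ∈ UNNat n :=
  ⟨fun i => one_apply_eq i, fun _ _ h => one_apply_ne h.ne'⟩

theorem mul_mem {A B : Matrix (Fin n) (Fin n) ℕ} (hA : A ∈ UNNat n) (hB : B ∈ UNNat n) :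
    A * B ∈ UNNat n := by
  refine ⟨fun i => ?_, fun i j hji => ?_⟩
  · rw [mul_apply, Finset.sum_eq_single i, hA.1, hB.1, one_mul]
    · intro m _ hm
      rcases hm.lt_or_gt with h | h
      · rw [hA.2 i m h, zero_mul]
      · rw [hB.2 m i h, mul_zero]
    · simp
  · rw [mul_apply]
    refine Finset.sum_eq_zero fun m _ => ?_
    rcases lt_or_ge m i with h | h
    · rw [hA.2 i m h, zero_mul]
    · rw [hB.2 m j (hji.trans_le h), mul_zero]

def submonoid (n : ℕ) : Submonoid (Matrix (Fin n) (Fin n) ℕ) where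
  carrier := UNNat n
  one_mem' := one_mem
  mul_mem' := mul_mem

theorem lt_of_ne_of_apply_ne_zero {A : Matrix (Fin n) (Fin n) ℕ} (hA : A ∈ UNNat n) {k l : Fin n}
    (hkl : k ≠ l) (hA₀ : A k l ≠ 0) : k < l :=
  hkl.lt_of_le (le_of_not_gt fun h => hA₀ (hA.2 k l h))

theorem exists_apply_ne_zero_row_eq_one {A : Matrix (Fin n) (Fin n) ℕ} (hA : A ∈ UNNat n)
    (h : A ≠ 1) : ∃ i j, i < j ∧ A i j ≠ 0 ∧ A j = (1 : Matrix (Fin n) (Fin n) ℕ) j := by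
  classical
  set s := Finset.univ.filter fun p : Fin n × Fin n => p.1 ≠ p.2 ∧ A p.1 p.2 ≠ 0
  have hs : s.Nonempty := by
    obtain ⟨k, l, hkl, hA₀⟩ := exists_ne_zero_of_diag_eq_one hA.1 h
    exact ⟨(k, l), by simp [s, hkl, hA₀]⟩
  obtain ⟨⟨i, j⟩, hij, hmax⟩ := s.exists_max_image Prod.fst hs
  simp only [s, Finset.mem_filter, Finset.mem_univ, true_and] at hij hmax
  have hlt := lt_of_ne_of_apply_ne_zero hA hij.1 hij.2
  refine ⟨i, j, hlt, hij.2, funext fun l => ?_⟩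
  by_cases hjl : j = l
  · subst hjl
    simp [hA.1]
  · rw [one_apply_ne hjl]
    by_contra hA₀
    exact (hmax (j, l) ⟨hjl, hA₀⟩).not_gt hlt

end UNNat

section Elem

variable {n : ℕ}

theorem elem_apply_of_ne (i j : Fin n) {k l : Fin n} (hkl : k ≠ l) :
    Elem n i j k l = single i j 1 k l := by
  rw [_root_.Elem, Matrix.add_apply, one_apply_ne hkl, zero_add]

theorem elem_mem_UNNat {i j : Fin n} (hij : i < j) : Elem n i j ∈ UNNat n := by
  refine ⟨fun k => ?_, fun k l hlk => ?_⟩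
  · rw [_root_.Elem, Matrix.add_apply, one_apply_eq, single_apply,
      if_neg fun h => hij.ne (h.1.trans h.2.symm), add_zero]
  · rw [elem_apply_of_ne i j hlk.ne', single_apply, if_neg]
    rintro ⟨rfl, rfl⟩
    exact hij.not_gt hlk

theorem elem_ne_one {i j : Fin n} (hij : i ≠ j) : Elem n i j ≠ 1 := by
  intro h
  have := congr_fun₂ h i j
  rw [elem_apply_of_ne i j hij, single_apply_same, one_apply_ne hij] at this
  exact one_ne_zero this

theorem elem_mul_of_row_eq_one {A : Matrix (Fin n) (Fin n) ℕ} {j : Fin n}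
    (hA : A j = (1 : Matrix (Fin n) (Fin n) ℕ) j) (i : Fin n) :
    Elem n i j * A = A + single i j 1 := by
  rw [_root_.Elem, add_mul, one_mul, single_mul_of_row_eq_one hA]

theorem eq_one_or_eq_one_of_mul_eq_elem {X Y : Matrix (Fin n) (Fin n) ℕ} (hX : ∀ k, X k k = 1)
    (hY : ∀ k, Y k k = 1) {i j : Fin n} (h : X * Y = Elem n i j) : X = 1 ∨ Y = 1 := by
  have hle : ∀ k l, k ≠ l → X k l + Y k l ≤ single i j 1 k l := fun k l hkl => by
    rw [← elem_apply_of_ne i j hkl, ← h]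
    exact add_le_mul_apply_of_diag_eq_one (hX k) (hY l) hkl
  have hsupp : ∀ k l, k ≠ l → X k l + Y k l ≠ 0 → i = k ∧ j = l := fun k l hkl hne => by
    by_contra hij
    have := hle k l hkl
    rw [single_apply, if_neg hij] at this
    omega
  by_contra! hne
  obtain ⟨a, b, hab, hXab⟩ := exists_ne_zero_of_diag_eq_one hX hne.1
  obtain ⟨c, d, hcd, hYcd⟩ := exists_ne_zero_of_diag_eq_one hY hne.2
  obtain ⟨rfl, rfl⟩ := hsupp a b hab (by omega)
  obtain ⟨rfl, rfl⟩ := hsupp c d hcd (by omega)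
  have := hle i j hab
  rw [single_apply_same] at this
  omega

end Elem

namespace UNNat

variable {n : ℕ}

theorem exists_eq_elem_mul {A : Matrix (Fin n) (Fin n) ℕ} (hA : A ∈ UNNat n) (h : A ≠ 1) :
    ∃ i j, i < j ∧ ∃ A' ∈ UNNat n, A = Elem n i j * A' ∧
      ∑ k, ∑ l, A' k l < ∑ k, ∑ l, A k l := by
  obtain ⟨i, j, hij, hA₀, hrow⟩ := exists_apply_ne_zero_row_eq_one hA h
  set A' := A - single i j 1
  have hA'_apply : ∀ k l, ¬(i = k ∧ j = l) → A' k l = A k l := fun k l hkl => by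
    simp [A', hkl]
  have hdecomp : A = A' + single i j 1 := by
    ext k l
    by_cases hkl : i = k ∧ j = l
    · obtain ⟨rfl, rfl⟩ := hkl
      -- the truncated subtraction `A i j - 1` is exact because `A i j ≠ 0`
      simp only [A', Matrix.add_apply, Matrix.sub_apply, single_apply_same]
      omega
    · simp [hA'_apply k l hkl, hkl]
  have hA' : A' ∈ UNNat n := by
    refine ⟨fun k => ?_, fun k l hlk => ?_⟩
    · rw [hA'_apply k k fun h => hij.ne (h.1.trans h.2.symm), hA.1]
    · rw [hA'_apply k l fun h => hij.not_gt (h.1 ▸ h.2 ▸ hlk), hA.2 k l hlk]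
  have hrow' : A' j = (1 : Matrix (Fin n) (Fin n) ℕ) j :=
    funext fun l => (hA'_apply j l fun h => hij.ne' h.1.symm).trans (congr_fun hrow l)
  refine ⟨i, j, hij, A', hA', by rw [elem_mul_of_row_eq_one hrow', ← hdecomp], ?_⟩
  conv_rhs => rw [hdecomp]
  simp [Finset.sum_add_distrib, single_apply, ite_and]

theorem mem_closure_elem {A : Matrix (Fin n) (Fin n) ℕ} (hA : A ∈ UNNat n) :
    A ∈ Submonoid.closure {E | ∃ i j : Fin n, i < j ∧ E = Elem n i j} := by
  induction hN : ∑ k, ∑ l, A k l using Nat.strong_induction_on generalizing A with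
  | _ N ih =>
  by_cases h₁ : A = 1
  · exact h₁ ▸ Submonoid.one_mem _
  obtain ⟨i, j, hij, A', hA', rfl, hlt⟩ := exists_eq_elem_mul hA h₁
  exact Submonoid.mul_mem _ (Submonoid.subset_closure ⟨i, j, hij, rfl⟩) (ih _ (hN ▸ hlt) hA' rfl)

theorem closure_elem_eq (n : ℕ) :
    (Submonoid.closure {E | ∃ i j : Fin n, i < j ∧ E = Elem n i j} :
      Set (Matrix (Fin n) (Fin n) ℕ)) = UNNat n := by
  refine subset_antisymm ?_ fun A hA => mem_closure_elem hA
  refine (Submonoid.closure_le (S := submonoid n)).mpr ?_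
  rintro _ ⟨i, j, hij, rfl⟩
  exact elem_mem_UNNat hij

theorem elem_mem_of_closure_eq {B : Set (Matrix (Fin n) (Fin n) ℕ)}
    (hB : (Submonoid.closure B : Set (Matrix (Fin n) (Fin n) ℕ)) = UNNat n) {i j : Fin n}
    (hij : i < j) : Elem n i j ∈ B := by
  have hmem : ∀ X, X ∈ Submonoid.closure B → X ∈ UNNat n := fun X hX => hB ▸ hX
  refine Submonoid.mem_of_mem_closure_of_indecomposable ?_ (elem_ne_one hij.ne)
    fun X hX Y hY hXY => eq_one_or_eq_one_of_mul_eq_elem (hmem X hX).1 (hmem Y hY).1 hXY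
  rw [← SetLike.mem_coe, hB]
  exact elem_mem_UNNat hij

end UNNat

/-- `{E_{i,j} : i < j}` is the unique minimal generating set of `U(n,ℕ)`:
it generates `U(n,ℕ)`, and it is contained in every generating set. -/
theorem elem_unique_minimal_generating_set (n : ℕ) :
    (Submonoid.closure {E | ∃ i j : Fin n, i < j ∧ E = Elem n i j} :
        Set (Matrix (Fin n) (Fin n) ℕ)) = UNNat n ∧
    ∀ B : Set (Matrix (Fin n) (Fin n) ℕ),
      (Submonoid.closure B : Set (Matrix (Fin n) (Fin n) ℕ)) = UNNat n →
      {E | ∃ i j : Fin n, i < j ∧ E = Elem n i j} ⊆ B := by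
  refine ⟨UNNat.closure_elem_eq n, ?_⟩
  rintro B hB _ ⟨i, j, hij, rfl⟩
  exact UNNat.elem_mem_of_closure_eq hB hij
end

section
/- Let S be a unipotent numerical monoid with S* := S \ {1ₙ}. Then S* \ (S* S*) is the unique minimal generating set of S: it generates S, and it is contained in every generating set of S. -/
open Matrix Set Pointwise

/-!
In any monoid, an element of `S* \ S* S*` can only be produced by a generating set `B` if it
already lies in `B`: a product of two factors that are both `≠ 1` lies in `S* S*`.

Conversely, for nonnegative matrices with unit diagonal the entries of `A * B` dominate those
of `A` and of `B`, since `(A * B) i j ≥ A i j * B j j` and `(A * B) i j ≥ A i i * B i j`; the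
domination is strict as soon as the other factor is not `1`, by cancellation in the group.
Hence the natural-number entries give a well-founded grading of `S` that strictly grows along
nontrivial factorisations, and well-founded induction writes every element of `S` as a product
of elements of `S* \ S* S*`.
-/

section Monoid

variable {M : Type*} [Monoid M]

theorem diff_one_diff_mul_subset_of_closure_eq {S B : Set M}
    (hB : (Submonoid.closure B : Set M) = S) :
    (S \ {1}) \ ((S \ {1}) * (S \ {1})) ⊆ B := by
  have key : ∀ y ∈ Submonoid.closure B, y ∈ B ∨ y = 1 ∨ y ∈ (S \ {1}) * (S \ {1}) := by
    intro y hy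
    induction hy using Submonoid.closure_induction with
    | mem y hy => exact .inl hy
    | one => exact .inr (.inl rfl)
    | mul a b ha hb iha ihb =>
      by_cases ha1 : a = 1
      · simpa [ha1] using ihb
      by_cases hb1 : b = 1
      · simpa [hb1] using iha
      exact .inr (.inr (mul_mem_mul ⟨hB ▸ ha, ha1⟩ ⟨hB ▸ hb, hb1⟩))
  rintro x ⟨⟨hxS, hx1⟩, hxT⟩
  rcases key x (by rwa [← SetLike.mem_coe, hB]) with hxB | hx1' | hxT'
  exacts [hxB, (hx1 hx1').elim, (hxT hxT').elim]

theorem Submonoid.closure_diff_one_diff_mul_eq {α : Type*} [Preorder α] [WellFoundedLT α]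
    (S : Submonoid M) (f : M → α)
    (hf : ∀ a ∈ S, ∀ b ∈ S, (b ≠ 1 → f a < f (a * b)) ∧ (a ≠ 1 → f b < f (a * b))) :
    closure (((S : Set M) \ {1}) \ (((S : Set M) \ {1}) * ((S : Set M) \ {1}))) = S := by
  refine le_antisymm (closure_le.2 fun x hx => hx.1.1) fun a => ?_
  induction a using (InvImage.wf f wellFounded_lt).induction with
  | _ a ih =>
    intro ha
    by_cases ha1 : a = 1
    · exact ha1.symm ▸ one_mem _
    by_cases haT : a ∈ ((S : Set M) \ {1}) * ((S : Set M) \ {1})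
    · obtain ⟨b, ⟨hb, hb1⟩, c, ⟨hc, hc1⟩, rfl⟩ := haT
      exact mul_mem (ih b ((hf b hb c hc).1 hc1) hb) (ih c ((hf b hb c hc).2 hb1) hc)
    · exact subset_closure ⟨⟨ha, ha1⟩, haT⟩

end Monoid

section NonnegMatrix

variable {m R : Type*} [Fintype m] [Semiring R] [PartialOrder R] [IsOrderedRing R]
  {A B : Matrix m m R}

theorem Matrix.apply_le_mul_apply_of_diag_eq_one (hA : ∀ i j, 0 ≤ A i j)
    (hB : ∀ i j, 0 ≤ B i j) (hBd : ∀ j, B j j = 1) (i j : m) : A i j ≤ (A * B) i j := by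
  calc A i j = A i j * B j j := by rw [hBd, mul_one]
    _ ≤ ∑ k, A i k * B k j :=
      Finset.single_le_sum (fun k _ => mul_nonneg (hA i k) (hB k j)) (Finset.mem_univ j)

theorem Matrix.apply_le_mul_apply_of_diag_eq_one' (hA : ∀ i j, 0 ≤ A i j)
    (hB : ∀ i j, 0 ≤ B i j) (hAd : ∀ i, A i i = 1) (i j : m) : B i j ≤ (A * B) i j := by
  calc B i j = A i i * B i j := by rw [hAd, one_mul]
    _ ≤ ∑ k, A i k * B k j :=
      Finset.single_le_sum (fun k _ => mul_nonneg (hA i k) (hB k j)) (Finset.mem_univ i)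

end NonnegMatrix

theorem Matrix.toNat_entries_lt_of_le_of_ne {m : Type*} {X Y : Matrix m m ℤ}
    (hX : ∀ i j, 0 ≤ X i j) (hle : ∀ i j, X i j ≤ Y i j) (hne : X ≠ Y) :
    (fun i j => (X i j).toNat) < fun i j => (Y i j).toNat := by
  refine lt_of_le_of_ne (fun i j => Int.toNat_le_toNat (hle i j)) fun h => hne ?_
  ext i j
  have hij := congr_fun₂ h i j
  have := hX i j
  have := hle i j
  omega

section GNat

variable {n : ℕ} {G : Subgroup (GLn n)}

def natEntries (A : GLn n) : Fin n → Fin n → ℕ :=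
  fun i j => ((A : Matrix (Fin n) (Fin n) ℤ) i j).toNat

theorem natEntries_lt_natEntries_mul (hG : ∀ A ∈ G, Unitri A) {A B : GLn n}
    (hA : A ∈ GNat G) (hB : B ∈ GNat G) :
    (B ≠ 1 → natEntries A < natEntries (A * B)) ∧ (A ≠ 1 → natEntries B < natEntries (A * B)) :=
  ⟨fun hB1 => Matrix.toNat_entries_lt_of_le_of_ne hA.2
      (Matrix.apply_le_mul_apply_of_diag_eq_one hA.2 hB.2 (hG B hB.1).1)
      fun h => hB1 (mul_eq_left.1 (Units.ext h.symm)),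
    fun hA1 => Matrix.toNat_entries_lt_of_le_of_ne hB.2
      (Matrix.apply_le_mul_apply_of_diag_eq_one' hA.2 hB.2 (hG A hA.1).1)
      fun h => hA1 (mul_eq_right.1 (Units.ext h.symm))⟩

end GNat

/-- `S* \ (S* S*)` is the unique minimal generating set of the unipotent numerical
monoid `S`: it generates `S` and is contained in every generating set of `S`. -/
theorem unique_minimal_generating_set {n : ℕ} (G : Subgroup (GLn n))
    (hG : ∀ A ∈ G, Unitri A) (S : Set (GLn n)) (hS : IsUNM G S) :
    (Submonoid.closure ((S \ {1}) \ ((S \ {1}) * (S \ {1}))) : Set (GLn n)) = S ∧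
    ∀ B : Set (GLn n), (Submonoid.closure B : Set (GLn n)) = S →
      (S \ {1}) \ ((S \ {1}) * (S \ {1})) ⊆ B := by
  obtain ⟨hSG, hone, hmul, -, -⟩ := hS
  let T : Submonoid (GLn n) :=
    { carrier := S, mul_mem' := fun ha hb => hmul _ ha _ hb, one_mem' := hone }
  refine ⟨?_, fun B hB => diff_one_diff_mul_subset_of_closure_eq hB⟩
  exact congrArg SetLike.coe <| T.closure_diff_one_diff_mul_eq natEntries
    fun A hA B hB => natEntries_lt_natEntries_mul hG (hSG hA) (hSG hB)
end

section
/- Let S be a unipotent numerical monoid in G(ℕ) and let ≤ be the partial order A ≤ B ⟺ A⁻¹B ∈ S on G(ℕ). Then (G(ℕ), ≤) is a locally finite poset: every interval [A,B] := {C : A ≤ C and C ≤ B} is finite. -/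
open Matrix Set Pointwise

/-- For the `S`-order `A ≤ B ↔ A⁻¹B ∈ S`, the poset `(G(ℕ), ≤)` is locally finite:
every interval `[A,B]` is finite. -/
theorem locally_finite_poset {n : ℕ} (G : Subgroup (GLn n)) (hG : ∀ A ∈ G, Unitri A)
    (S : Set (GLn n)) (hS : IsUNM G S) (A B : GLn n)
    (hA : A ∈ GNat G) (hB : B ∈ GNat G) :
    {C ∈ GNat G | A⁻¹ * C ∈ S ∧ C⁻¹ * B ∈ S}.Finite := by
  set T : Set (Matrix (Fin n) (Fin n) ℤ) :=
    Set.pi Set.univ (fun i => Set.pi Set.univ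
      (fun j => Set.Icc 0 ((B : Matrix (Fin n) (Fin n) ℤ) i j))) with hT
  have hTfin : T.Finite := by
    apply Set.Finite.pi
    intro i
    apply Set.Finite.pi
    intro j
    exact Set.finite_Icc _ _
  have hinj : Function.Injective (fun C : GLn n => (C : Matrix (Fin n) (Fin n) ℤ)) :=
    fun a b h => Units.ext h
  apply Set.Finite.subset (hTfin.preimage (hinj.injOn))
  rintro C ⟨hCG, -, hCB⟩
  intro i _ j _
  constructor
  · exact hCG.2 i j
  · -- C i j ≤ B i j since B = C * (C⁻¹ B) with nonneg unitriangular factors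
    have hD := hS.1 hCB
    have hDu : Unitri (C⁻¹ * B) := hG _ hD.1
    have hBval : (B : Matrix (Fin n) (Fin n) ℤ)
        = (C : Matrix (Fin n) (Fin n) ℤ) * ((C⁻¹ * B : GLn n) : Matrix (Fin n) (Fin n) ℤ) := by
      rw [← Units.val_mul]
      congr 1
      group
    have hsum : (B : Matrix (Fin n) (Fin n) ℤ) i j
        = ∑ k, (C : Matrix (Fin n) (Fin n) ℤ) i k
            * ((C⁻¹ * B : GLn n) : Matrix (Fin n) (Fin n) ℤ) k j := by
      rw [hBval]; rfl
    rw [hsum]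
    have hterm : (C : Matrix (Fin n) (Fin n) ℤ) i j
        = (C : Matrix (Fin n) (Fin n) ℤ) i j
          * ((C⁻¹ * B : GLn n) : Matrix (Fin n) (Fin n) ℤ) j j := by
      rw [hDu.1 j, mul_one]
    show (C : Matrix (Fin n) (Fin n) ℤ) i j ≤ _
    rw [hterm]
    apply Finset.single_le_sum (f := fun k => (C : Matrix (Fin n) (Fin n) ℤ) i k
        * ((C⁻¹ * B : GLn n) : Matrix (Fin n) (Fin n) ℤ) k j)
    · intro k _
      exact mul_nonneg (hCG.2 i k) (hD.2 k j)
    · exact Finset.mem_univ j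
end

section
/- Let S be a unipotent numerical monoid and F its left Frobenius set F_l(S) := {A ∈ G(ℕ) : A ∉ S* and A·(G(ℕ)*) ⊆ S}, where X* := X \ {1ₙ}. Then S ∪ F_l(S) is closed under multiplication, hence is a unipotent numerical monoid. -/
open Matrix Set Pointwise

/-- The left Frobenius set `F_l(S) = {A ∈ G(ℕ) : A ∉ S* and A·G(ℕ)* ⊆ S}`. -/
def Fl {n : ℕ} (G : Subgroup (GLn n)) (S : Set (GLn n)) : Set (GLn n) :=
  {A ∈ GNat G | A ∉ S \ ({1} : Set (GLn n)) ∧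
    ∀ B ∈ GNat G \ ({1} : Set (GLn n)), A * B ∈ S}

lemma gnat_mul {n : ℕ} {G : Subgroup (GLn n)} {A B : GLn n}
    (hA : A ∈ GNat G) (hB : B ∈ GNat G) : A * B ∈ GNat G := by
  refine ⟨G.mul_mem hA.1 hB.1, fun i j => ?_⟩
  have h : ((A * B : GLn n) : Matrix (Fin n) (Fin n) ℤ) =
      (A : Matrix (Fin n) (Fin n) ℤ) * (B : Matrix (Fin n) (Fin n) ℤ) := rfl
  rw [h, Matrix.mul_apply]
  exact Finset.sum_nonneg fun k _ => mul_nonneg (hA.2 i k) (hB.2 k j)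

/-- `S ∪ F_l(S)` is closed under multiplication and hence is a unipotent numerical
monoid. -/
theorem union_left_frobenius_unm {n : ℕ} (G : Subgroup (GLn n))
    (hG : ∀ A ∈ G, Unitri A) (S : Set (GLn n)) (hS : IsUNM G S) :
    (∀ A ∈ S ∪ Fl G S, ∀ B ∈ S ∪ Fl G S, A * B ∈ S ∪ Fl G S) ∧
    IsUNM G (S ∪ Fl G S) := by
  obtain ⟨hSub, h1, hmul, hfin, F0, hF0⟩ := hS
  have hFlsub : Fl G S ⊆ GNat G := fun A hA => hA.1
  have hclosed : ∀ A ∈ S ∪ Fl G S, ∀ B ∈ S ∪ Fl G S, A * B ∈ S ∪ Fl G S := by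
    rintro A hA B hB
    rcases hB with hBS | hBF
    · rcases hA with hAS | hAF
      · exact Or.inl (hmul A hAS B hBS)
      · by_cases hB1 : B = 1
        · rw [hB1, mul_one]; exact Or.inr hAF
        · exact Or.inl (hAF.2.2 B ⟨hSub hBS, hB1⟩)
    · by_cases hB1 : B = 1
      · rw [hB1, mul_one]; exact hA
      · rcases hA with hAS | hAF
        · by_cases hABS : A * B ∈ S
          · exact Or.inl hABS
          · refine Or.inr ⟨gnat_mul (hSub hAS) hBF.1, fun h => hABS h.1, fun C hC => ?_⟩
            rw [mul_assoc]; exact hmul A hAS _ (hBF.2.2 C hC)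
        · exact Or.inl (hAF.2.2 B ⟨hBF.1, hB1⟩)
  refine ⟨hclosed, union_subset hSub hFlsub, Or.inl h1, hclosed,
    hfin.subset (diff_subset_diff_right subset_union_left), ?_⟩
  have hT : (Fl G S \ S).Finite :=
    hfin.subset (fun x hx => ⟨hFlsub hx.1, hx.2⟩)
  refine ⟨F0 ∪ hT.toFinset, ?_⟩
  set M : Submonoid (GLn n) :=
    { carrier := S ∪ Fl G S
      mul_mem' := fun {a b} ha hb => hclosed a ha b hb
      one_mem' := Or.inl h1 } with hM
  apply subset_antisymm
  · have hle : Submonoid.closure ((F0 ∪ hT.toFinset : Finset (GLn n)) : Set (GLn n)) ≤ M := by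
      rw [Submonoid.closure_le]
      intro x hx
      rw [Finset.coe_union] at hx
      rcases hx with hx | hx
      · have hxm : x ∈ (Submonoid.closure ((F0 : Finset (GLn n)) : Set (GLn n)) : Set (GLn n)) :=
          Submonoid.subset_closure hx
        rw [hF0] at hxm
        exact Or.inl hxm
      · exact Or.inr (hT.mem_toFinset.mp hx).1
    exact hle
  · intro x hx
    rcases hx with hx | hx
    · have hxm : x ∈ (Submonoid.closure ((F0 : Finset (GLn n)) : Set (GLn n)) : Set (GLn n)) := by
        rw [hF0]; exact hx
      exact Submonoid.closure_mono (by simp) hxm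
    · by_cases hxS : x ∈ S
      · have hxm : x ∈ (Submonoid.closure ((F0 : Finset (GLn n)) : Set (GLn n)) : Set (GLn n)) := by
          rw [hF0]; exact hxS
        exact Submonoid.closure_mono (by simp) hxm
      · refine Submonoid.subset_closure ?_
        simp only [Finset.coe_union, Set.mem_union, Finset.mem_coe, hT.mem_toFinset]
        exact Or.inr ⟨hx, hxS⟩
end

section
/- Let S be a unipotent numerical monoid with two-sided Frobenius set F_t(S) := {A ∈ G(ℕ) : A ∉ S* and A·G(ℕ)* ∪ G(ℕ)*·A ⊆ S}. Then for every subset C ⊆ F_t(S), the union S ∪ C is a unipotent numerical monoid. -/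
open Matrix Set Pointwise

/-- The two-sided Frobenius set
`F_t(S) = {A ∈ G(ℕ) : A ∉ S* and A·G(ℕ)* ∪ G(ℕ)*·A ⊆ S}`. -/
def Ft {n : ℕ} (G : Subgroup (GLn n)) (S : Set (GLn n)) : Set (GLn n) :=
  {A ∈ GNat G | A ∉ S \ ({1} : Set (GLn n)) ∧
    ∀ B ∈ GNat G \ ({1} : Set (GLn n)), A * B ∈ S ∧ B * A ∈ S}

/-- For every subset `C` of the two-sided Frobenius set `F_t(S)`, the union `S ∪ C`
is a unipotent numerical monoid. -/
theorem union_subset_frobenius_unm {n : ℕ} (G : Subgroup (GLn n))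
    (hG : ∀ A ∈ G, Unitri A) (S : Set (GLn n)) (hS : IsUNM G S)
    (C : Set (GLn n)) (hC : C ⊆ Ft G S) :
    IsUNM G (S ∪ C) := by
  classical
  obtain ⟨hSG, h1, hmul, hfin, F, hF⟩ := hS
  have hCG : C ⊆ GNat G := fun A hA => (hC hA).1
  have key : ∀ A ∈ C, ∀ B ∈ GNat G, B ≠ 1 → A * B ∈ S ∧ B * A ∈ S := by
    intro A hA B hB hB1
    exact (hC hA).2.2 B ⟨hB, by simpa using hB1⟩
  have hmul' : ∀ A ∈ S ∪ C, ∀ B ∈ S ∪ C, A * B ∈ S ∪ C := by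
    rintro A (hA | hA) B (hB | hB)
    · exact Or.inl (hmul A hA B hB)
    · by_cases h : A = 1
      · subst h; simpa using Or.inr hB
      · exact Or.inl ((key B hB A (hSG hA) h).2)
    · by_cases h : B = 1
      · subst h; simpa using Or.inr hA
      · exact Or.inl ((key A hA B (hSG hB) h).1)
    · by_cases h : B = 1
      · subst h; simpa using Or.inr hA
      · exact Or.inl ((key A hA B (hCG hB) h).1)
  have hCfin : C.Finite := by
    refine (hfin.insert 1).subset ?_
    intro A hA
    by_cases h : A = 1
    · exact Or.inl h
    · refine Or.inr ⟨(hC hA).1, fun hAS => (hC hA).2.1 ⟨hAS, by simpa using h⟩⟩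
  refine ⟨union_subset hSG hCG, Or.inl h1, hmul', hfin.subset (fun A hA => ⟨hA.1, fun h => hA.2 (Or.inl h)⟩), ?_⟩
  refine ⟨F ∪ hCfin.toFinset, ?_⟩
  have hcoe : ((F ∪ hCfin.toFinset : Finset (GLn n)) : Set (GLn n)) = (F : Set (GLn n)) ∪ C := by
    simp [Finset.coe_union]
  rw [hcoe]
  set M : Submonoid (GLn n) :=
    { carrier := S ∪ C
      one_mem' := Or.inl h1
      mul_mem' := fun {a b} ha hb => hmul' a ha b hb }
  apply subset_antisymm
  · refine Submonoid.closure_le.mpr (?_ : (F : Set (GLn n)) ∪ C ⊆ (M : Set (GLn n)))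
    refine union_subset (fun A hA => Or.inl ?_) (fun A hA => Or.inr hA)
    rw [← hF]; exact Submonoid.subset_closure hA
  · rintro A (hA | hA)
    · have : A ∈ (Submonoid.closure (F : Set (GLn n)) : Set (GLn n)) := by rw [hF]; exact hA
      exact Submonoid.closure_mono (subset_union_left) this
    · exact Submonoid.subset_closure (Or.inr hA)
end

section
/- Let S be a unipotent numerical monoid with |F_l(S)| = 1, where F_l(S) is the left Frobenius set. Then S is irreducible if and only if S is maximal (under inclusion) among unipotent numerical monoids T satisfying F_l(S) ∩ T = ∅. -/
/-!
Write `F_l(S) = {A}`. If `B ∈ S \ {1}` had `B * A ∉ S`, then `B * A` would be a second element of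
`F_l(S)`; hence `S ∪ {A}` is again a unipotent numerical monoid. So a monoid `T ⊋ S` avoiding `A`
splits `S = T ∩ (S ∪ {A})`. Conversely, if `S = T₁ ∩ T₂` then `A` misses one of the `Tᵢ`, since
`A ∈ S` would force `A = 1` and then `S = G(ℕ)`.
-/

open Matrix Set Pointwise

/-- `S` is irreducible: it cannot be written as the intersection of two unipotent
numerical monoids each properly containing it. -/
def IrredUNM {n : ℕ} (G : Subgroup (GLn n)) (S : Set (GLn n)) : Prop :=
  IsUNM G S ∧ ¬ ∃ T₁ T₂ : Set (GLn n),
    IsUNM G T₁ ∧ IsUNM G T₂ ∧ S ⊂ T₁ ∧ S ⊂ T₂ ∧ T₁ ∩ T₂ = S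

theorem Submonoid.coe_closure_insert_of_mul_mem {M : Type*} [Monoid M] {F : Set M} {a : M}
    (hmul : ∀ x ∈ insert a (closure F : Set M), ∀ y ∈ insert a (closure F : Set M),
      x * y ∈ insert a (closure F : Set M)) :
    (closure (insert a F) : Set M) = insert a (closure F : Set M) := by
  let N : Submonoid M :=
    { carrier := insert a (closure F : Set M)
      mul_mem' := fun hx hy => hmul _ hx _ hy
      one_mem' := Or.inr (one_mem _) }
  refine subset_antisymm (closure_le (S := N).mpr (insert_subset_insert subset_closure)) ?_
  exact insert_subset_iff.mpr ⟨subset_closure (mem_insert a F), closure_mono (subset_insert a F)⟩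

section

variable {n : ℕ} {G : Subgroup (GLn n)} {S : Set (GLn n)} {A : GLn n}

theorem mul_mem_GNat {B : GLn n} (hA : A ∈ GNat G) (hB : B ∈ GNat G) : A * B ∈ GNat G := by
  refine ⟨G.mul_mem hA.1 hB.1, fun i j => ?_⟩
  change 0 ≤ ((A : Matrix (Fin n) (Fin n) ℤ) * (B : Matrix (Fin n) (Fin n) ℤ)) i j
  rw [Matrix.mul_apply]
  exact Finset.sum_nonneg fun k _ => mul_nonneg (hA.2 i k) (hB.2 k j)

theorem mul_mem_of_Fl_eq_singleton (hS : IsUNM G S) (hF : Fl G S = {A})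
    {B : GLn n} (hB : B ∈ S) (hB1 : B ≠ 1) : B * A ∈ S := by
  obtain ⟨hAG, -, hAmul⟩ : A ∈ Fl G S := hF ▸ mem_singleton A
  by_contra hBA
  have hBA_Fl : B * A ∈ Fl G S :=
    ⟨mul_mem_GNat (hS.1 hB) hAG, fun h => hBA h.1,
      fun C hC => mul_assoc B A C ▸ hS.2.2.1 B hB _ (hAmul C hC)⟩
  rw [hF, mem_singleton_iff, mul_eq_right] at hBA_Fl
  exact hB1 hBA_Fl

theorem isUNM_insert_of_mem_Fl (hS : IsUNM G S) (hA : A ∈ Fl G S)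
    (hleft : ∀ B ∈ S, B ≠ 1 → B * A ∈ S) : IsUNM G (insert A S) := by
  obtain ⟨hSG, hS1, hSmul, hSfin, F, hFS⟩ := hS
  obtain ⟨hAG, -, hAmul⟩ := hA
  have hsub : insert A S ⊆ GNat G := insert_subset_iff.mpr ⟨hAG, hSG⟩
  have hA_mul : ∀ Y ∈ insert A S, A * Y ∈ insert A S := by
    intro Y hY
    by_cases hY1 : Y = 1
    · simp [hY1]
    · exact Or.inr (hAmul Y ⟨hsub hY, hY1⟩)
  have hmul : ∀ X ∈ insert A S, ∀ Y ∈ insert A S, X * Y ∈ insert A S := by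
    rintro X (rfl | hX) Y hY
    · exact hA_mul Y hY
    rcases hY with rfl | hY
    · by_cases hX1 : X = 1
      · simp [hX1]
      · exact Or.inr (hleft X hX hX1)
    · exact Or.inr (hSmul X hX Y hY)
  refine ⟨hsub, Or.inr hS1, hmul, hSfin.subset (sdiff_subset_sdiff_right (subset_insert A S)),
    insert A F, ?_⟩
  rw [Finset.coe_insert, Submonoid.coe_closure_insert_of_mul_mem (hFS ▸ hmul), hFS]

theorem GNat_subset_of_one_mem_Fl (hS : IsUNM G S) (h1 : (1 : GLn n) ∈ Fl G S) :
    GNat G ⊆ S := by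
  intro B hB
  by_cases hB1 : B = 1
  · exact hB1 ▸ hS.2.1
  · simpa using h1.2.2 B ⟨hB, hB1⟩

end

theorem irreducible_iff_maximal_general {n : ℕ} (G : Subgroup (GLn n))
    (S : Set (GLn n)) (hS : IsUNM G S)
    (hF : ∃ A : GLn n, Fl G S = {A}) :
    IrredUNM G S ↔
      ∀ T : Set (GLn n), IsUNM G T → Fl G S ∩ T = ∅ → S ⊆ T → T = S := by
  obtain ⟨A, hFA⟩ := hF
  have hA : A ∈ Fl G S := hFA ▸ mem_singleton A
  simp only [hFA, singleton_inter_eq_empty]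
  constructor
  · rintro ⟨-, hirr⟩ T hT hAT hST
    by_contra hTS
    have hAS : A ∉ S := fun h => hAT (hST h)
    refine hirr ⟨T, insert A S, hT, isUNM_insert_of_mem_Fl hS hA
      (fun B => mul_mem_of_Fl_eq_singleton hS hFA), hST.ssubset_of_ne (Ne.symm hTS),
      ssubset_insert hAS, ?_⟩
    rw [inter_insert_of_notMem hAT, inter_eq_right.mpr hST]
  · refine fun hmax => ⟨hS, ?_⟩
    rintro ⟨T₁, T₂, hT₁, hT₂, hST₁, hST₂, hS_eq⟩
    by_cases hA₁ : A ∈ T₁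
    · by_cases hA₂ : A ∈ T₂
      · have hA1 : A = 1 := not_not.mp fun h => hA.2.1 ⟨hS_eq ▸ ⟨hA₁, hA₂⟩, h⟩
        exact hST₁.not_subset ((hT₁.1).trans (GNat_subset_of_one_mem_Fl hS (hA1 ▸ hA)))
      · exact hST₂.ne (hmax T₂ hT₂ hA₂ hST₂.subset).symm
    · exact hST₁.ne (hmax T₁ hT₁ hA₁ hST₁.subset).symm

/-- If `|F_l(S)| = 1`, then `S` is irreducible if and only if `S` is maximal among
unipotent numerical monoids `T` with `F_l(S) ∩ T = ∅`. -/
theorem irreducible_iff_maximal {n : ℕ} (G : Subgroup (GLn n))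
    (hG : ∀ A ∈ G, Unitri A) (S : Set (GLn n)) (hS : IsUNM G S)
    (hF : ∃ A : GLn n, Fl G S = {A}) :
    IrredUNM G S ↔
      ∀ T : Set (GLn n), IsUNM G T → Fl G S ∩ T = ∅ → S ⊆ T → T = S :=
  irreducible_iff_maximal_general G S hS hF
end

section
/- Let S be a unipotent numerical monoid with left Frobenius set F_l(S) of cardinality 1. If for every A ∈ G(ℕ) \ S either F_l(S) ∩ AS ≠ ∅ or F_l(S) ∩ SA ≠ ∅, then S is irreducible. -/
open Matrix Set Pointwise

/-- If `|F_l(S)| = 1` and for every gap `A ∈ G(ℕ) \ S` either `F_l(S) ∩ AS ≠ ∅` or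
`F_l(S) ∩ SA ≠ ∅`, then `S` is irreducible. -/
theorem irreducible_of_frobenius_condition {n : ℕ} (G : Subgroup (GLn n))
    (hG : ∀ A ∈ G, Unitri A) (S : Set (GLn n)) (hS : IsUNM G S)
    (hF : ∃ A : GLn n, Fl G S = {A})
    (hcond : ∀ A ∈ GNat G \ S,
      (Fl G S ∩ (fun B => A * B) '' S).Nonempty ∨
      (Fl G S ∩ (fun B => B * A) '' S).Nonempty) :
    IrredUNM G S := by
  obtain ⟨f, hFl⟩ := hF
  refine ⟨hS, ?_⟩
  rintro ⟨T₁, T₂, hT₁, hT₂, hST₁, hST₂, hcap⟩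
  have hfFl : f ∈ Fl G S := by rw [hFl]; rfl
  have key : ∀ T : Set (GLn n), IsUNM G T → S ⊂ T → f ∈ T := by
    intro T hT hST
    obtain ⟨A, hAT, hAS⟩ := exists_of_ssubset hST
    have hAG : A ∈ GNat G := hT.1 hAT
    rcases hcond A ⟨hAG, hAS⟩ with ⟨x, hx⟩ | ⟨x, hx⟩ <;> rw [hFl] at hx <;>
      obtain ⟨hxf, s, hsS, hxs⟩ := hx
    · have hfe : f = A * s := by rw [← hxf, ← hxs]
      rw [hfe]
      exact hT.2.2.1 A hAT s (hST.subset hsS)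
    · have hfe : f = s * A := by rw [← hxf, ← hxs]
      rw [hfe]
      exact hT.2.2.1 s (hST.subset hsS) A hAT
  have hfS : f ∈ S := by
    rw [← hcap]; exact ⟨key T₁ hT₁ hST₁, key T₂ hT₂ hST₂⟩
  have hf1 : f = 1 := by
    by_contra h
    exact hfFl.2.1 ⟨hfS, h⟩
  have hsub : GNat G ⊆ S := by
    intro B hB
    by_cases hB1 : B = (1 : GLn n)
    · rw [hB1]; exact hS.2.1
    · have := hfFl.2.2 B ⟨hB, hB1⟩
      rwa [hf1, one_mul] at this
  obtain ⟨A, hAT, hAS⟩ := exists_of_ssubset hST₁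
  exact hAS (hsub (hT₁.1 hAT))
end

section
/- For a relative right ideal I of a unipotent numerical monoid S, the left pseudo-Frobenius set PF_l(I) := {A ∈ G(ℕ) : A ∉ I* and AS* ⊆ I} equals the set of maximal elements of G(ℕ) \ I* with respect to the order A ≤_{S,l} B ⟺ A⁻¹B ∈ S. -/
open Matrix Set Pointwise

lemma key_unit {n : ℕ} (A C : GLn n)
    (hA1 : ∀ i : Fin n, (A : Matrix (Fin n) (Fin n) ℤ) i i = 1)
    (hA2 : ∀ i j : Fin n, j < i → (A : Matrix (Fin n) (Fin n) ℤ) i j = 0)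
    (hApos : ∀ i j : Fin n, 0 ≤ (A : Matrix (Fin n) (Fin n) ℤ) i j)
    (hC1 : ∀ i : Fin n, (C : Matrix (Fin n) (Fin n) ℤ) i i = 1)
    (hCpos : ∀ i j : Fin n, 0 ≤ (C : Matrix (Fin n) (Fin n) ℤ) i j)
    (h : A * C = 1) : A = 1 := by
  have hm : (A : Matrix (Fin n) (Fin n) ℤ) * (C : Matrix (Fin n) (Fin n) ℤ) = 1 := by
    have := congrArg (Units.val) h
    simpa using this
  ext i j
  rcases lt_trichotomy i j with hij | hij | hij
  · have h0 : ((A : Matrix (Fin n) (Fin n) ℤ) * (C : Matrix (Fin n) (Fin n) ℤ)) i j = 0 := by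
      rw [hm]
      simp [Matrix.one_apply, hij.ne]
    rw [Matrix.mul_apply] at h0
    have hz := (Finset.sum_eq_zero_iff_of_nonneg
      (fun k _ => mul_nonneg (hApos i k) (hCpos k j))).mp h0 j (Finset.mem_univ j)
    have hz' : (A : Matrix (Fin n) (Fin n) ℤ) i j = 0 := by
      rw [hC1 j, mul_one] at hz
      exact hz
    rw [hz']
    simp [Matrix.one_apply, hij.ne]
  · subst hij
    rw [hA1 i]
    simp [Matrix.one_apply]
  · rw [hA2 i j hij]
    simp [Matrix.one_apply, hij.ne']

/-- For a relative right ideal `I` of `S`, the left pseudo-Frobenius set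
`PF_l(I) = {A ∈ G(ℕ) : A ∉ I* and AS* ⊆ I}` equals the set of maximal elements of
`G(ℕ) \ I*` with respect to the order `A ≤_{S,l} B ↔ A⁻¹B ∈ S`. -/
theorem pseudo_frobenius_eq_maximals {n : ℕ} (G : Subgroup (GLn n))
    (hG : ∀ A ∈ G, Unitri A) (S : Set (GLn n)) (hS : IsUNM G S)
    (I : Set (GLn n)) (hIG : I ⊆ GNat G) (hI : I * S ⊆ I) :
    {A ∈ GNat G | A ∉ I \ ({1} : Set (GLn n)) ∧
        ∀ B ∈ S \ ({1} : Set (GLn n)), A * B ∈ I} =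
      {A ∈ GNat G \ (I \ ({1} : Set (GLn n))) |
        ∀ B ∈ GNat G \ (I \ ({1} : Set (GLn n))), A⁻¹ * B ∈ S → B = A} := by
  obtain ⟨hSG, h1S, hSmul, -, -⟩ := hS
  ext A
  simp only [mem_setOf_eq, mem_diff, mem_singleton_iff]
  constructor
  · rintro ⟨hAG, hAnI, hmul⟩
    refine ⟨⟨hAG, hAnI⟩, ?_⟩
    rintro B ⟨hBG, hBnI⟩ hC
    by_contra hne
    set C := A⁻¹ * B with hCdef
    have hCne : C ≠ 1 := by
      intro h1
      apply hne
      have h2 : A * C = A * 1 := by rw [h1]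
      rw [hCdef] at h2
      simpa using h2
    have hACB : A * C = B := by rw [hCdef]; group
    have hBI : B ∈ I := by
      have := hmul C ⟨hC, hCne⟩
      rwa [hACB] at this
    have hB1 : B = 1 := by
      by_contra hB1
      exact hBnI ⟨hBI, hB1⟩
    have hAC1 : A * C = 1 := by rw [hACB, hB1]
    obtain ⟨hAmemG, hApos⟩ := hAG
    obtain ⟨hCmemG, hCpos⟩ := hSG hC
    obtain ⟨hA1, hA2⟩ := hG A hAmemG
    obtain ⟨hC1, -⟩ := hG C hCmemG
    have hAone : A = 1 := key_unit A C hA1 hA2 hApos hC1 hCpos hAC1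
    apply hCne
    rw [hAone] at hAC1
    simpa using hAC1
  · rintro ⟨⟨hAG, hAnI⟩, hmax⟩
    refine ⟨hAG, hAnI, ?_⟩
    rintro B ⟨hBS, hBne⟩
    by_contra hABI
    have hBG := hSG hBS
    have hABG : A * B ∈ GNat G := by
      refine ⟨G.mul_mem hAG.1 hBG.1, ?_⟩
      intro i j
      have hcoe : ((A * B : GLn n) : Matrix (Fin n) (Fin n) ℤ) =
          (A : Matrix (Fin n) (Fin n) ℤ) * (B : Matrix (Fin n) (Fin n) ℤ) := rfl
      rw [hcoe, Matrix.mul_apply]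
      exact Finset.sum_nonneg fun k _ => mul_nonneg (hAG.2 i k) (hBG.2 k j)
    have heq := hmax (A * B) ⟨hABG, fun h => hABI h.1⟩ (by simpa using hBS)
    apply hBne
    have h2 : A * B = A * 1 := by simpa using heq
    exact mul_left_cancel h2
end

section
/- Let S be a unipotent numerical monoid and A ∈ G(ℕ) \ S. Then S ∪ {A} is a submonoid of G(ℕ) (hence a unipotent numerical monoid) if and only if A is a special gap of S, i.e., A ∈ PF_t(S) and A² ∈ S. -/
open Matrix Set Pointwise

/-- The two-sided pseudo-Frobenius set
`PF_t(S) = {A ∈ G(ℕ) : A ∉ S* and AS* ∪ S*A ⊆ S}`. -/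
def PFt {n : ℕ} (G : Subgroup (GLn n)) (S : Set (GLn n)) : Set (GLn n) :=
  {A ∈ GNat G | A ∉ S \ ({1} : Set (GLn n)) ∧
    ∀ C ∈ S \ ({1} : Set (GLn n)), A * C ∈ S ∧ C * A ∈ S}

/-- For `A ∈ G(ℕ) \ S`, the set `S ∪ {A}` is a submonoid of `G(ℕ)` (hence a unipotent
numerical monoid) if and only if `A` is a special gap of `S`, i.e. `A ∈ PF_t(S)` and
`A² ∈ S`. -/
theorem union_singleton_monoid_iff_special_gap {n : ℕ} (G : Subgroup (GLn n))
    (hG : ∀ A ∈ G, Unitri A) (S : Set (GLn n)) (hS : IsUNM G S)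
    (A : GLn n) (hA : A ∈ GNat G \ S) :
    (∀ X ∈ S ∪ {A}, ∀ Y ∈ S ∪ {A}, X * Y ∈ S ∪ ({A} : Set (GLn n))) ↔
      A ∈ PFt G S ∧ A * A ∈ S := by

  obtain ⟨hAG, hAnS⟩ := hA
  obtain ⟨hSsub, h1S, hmul, _, _⟩ := hS
  constructor
  · intro h
    have hA2 : A * A ∈ S := by
      rcases h A (Or.inr rfl) A (Or.inr rfl) with h' | h'
      · exact h'
      · exfalso
        apply hAnS
        have hA1 : A = 1 := by
          have : A * A = 1 * A := by simpa using h'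
          exact mul_right_cancel this
        rw [hA1]; exact h1S
    refine ⟨⟨hAG, ?_, ?_⟩, hA2⟩
    · intro hmem; exact hAnS hmem.1
    · intro C hC
      constructor
      · rcases h A (Or.inr rfl) C (Or.inl hC.1) with h' | h'
        · exact h'
        · exfalso
          apply hC.2
          have : A * C = A * 1 := by simpa using h'
          exact mul_left_cancel this
      · rcases h C (Or.inl hC.1) A (Or.inr rfl) with h' | h'
        · exact h'
        · exfalso
          apply hC.2
          have : C * A = 1 * A := by simpa using h'
          exact mul_right_cancel this
  · rintro ⟨⟨-, -, hPF⟩, hA2⟩ X hX Y hY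
    rcases hX with hX | hX <;> rcases hY with hY | hY
    · exact Or.inl (hmul X hX Y hY)
    · rw [hY]
      by_cases hX1 : X = 1
      · rw [hX1, one_mul]; exact Or.inr rfl
      · exact Or.inl (hPF X ⟨hX, hX1⟩).2
    · rw [hX]
      by_cases hY1 : Y = 1
      · rw [hY1, mul_one]; exact Or.inr rfl
      · exact Or.inl (hPF Y ⟨hY, hY1⟩).1
    · rw [hX, hY]; exact Or.inl hA2
end
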